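/- arXiv:math/0612241 — 5 statements merged into one kernel-verified Lean document; each statement's English description precedes it below -/
import Mathlib

section
/- For every countable limit ordinal δ < ω₁ of cofinality ω such that ω² divides δ, there exists a special ladder on δ. -/
set_option autoImplicit false
noncomputable section

open Ordinal Cardinal

/-- A ladder on a limit ordinal `δ`: a strictly increasing cofinal sequence of
successor ordinals below `δ`. -/
structure IsLadder (δ : Ordinal) (η : ℕ → Ordinal) : Prop where
  strictMono : StrictMono η
  isSucc : ∀ n : ℕ, ∃ α : Ordinal, η n = α + 1
  lt_delta : ∀ n : ℕ, η n < δ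
  cofinal : ∀ β < δ, ∃ n : ℕ, β < η n

/-- Conditions (a) and (b) for `k` to witness that the ladder `η` is special. -/
def SpecialCond (η : ℕ → Ordinal) (k : ℕ → ℕ) : Prop :=
  ∀ n : ℕ,
    (∀ i < k (n + 1) - k n, ∀ j < k (n + 1) - k n,
      η (k n + i) + Ordinal.omega0 = η (k n + j) + Ordinal.omega0) ∧
    η (k n) + Ordinal.omega0 < η (k (n + 1))

/-- A club (closed unbounded) subset of `ω₁`. -/
def IsClubBelowOmega1 (C : Set Ordinal) : Prop :=
  (∀ γ ∈ C, γ < ω₁) ∧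
  (∀ α < ω₁, ∃ γ ∈ C, α < γ) ∧
  (∀ δ, δ < ω₁ → δ ≠ 0 → (∀ β < δ, ∃ γ ∈ C, β < γ ∧ γ < δ) → δ ∈ C)

/-- A stationary subset of `ω₁`: one meeting every club. -/
def IsStationaryBelowOmega1 (T : Set Ordinal) : Prop :=
  ∀ C : Set Ordinal, IsClubBelowOmega1 C → (T ∩ C).Nonempty

/-- The standing hypotheses on the set `S`: a stationary, co-stationary subset of `ω₁`
consisting of limit ordinals of cofinality `ω` divisible by `ω²`. -/
structure GoodS (S : Set Ordinal) : Prop where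
  stationary : IsStationaryBelowOmega1 S
  costationary : IsStationaryBelowOmega1 ({α : Ordinal | α < ω₁} \ S)
  lt_omega1 : ∀ δ ∈ S, δ < ω₁
  isLimit : ∀ δ ∈ S, Order.IsSuccLimit δ
  cof_eq : ∀ δ ∈ S, Ordinal.cof δ = Cardinal.aleph0
  omega_sq_dvd : ∀ δ ∈ S, Ordinal.omega0 ^ 2 ∣ δ

/-- A special ladder system on `S`: for each `δ ∈ S` a special ladder `eta δ`
with witnessing sequence `kk δ`. -/
structure LadderSystem (S : Set Ordinal) where
  eta : Ordinal → ℕ → Ordinal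
  kk : Ordinal → ℕ → ℕ
  ladder : ∀ δ ∈ S, IsLadder δ (eta δ)
  kk_pos : ∀ δ ∈ S, 0 < kk δ 0
  kk_mono : ∀ δ ∈ S, StrictMono (kk δ)
  special : ∀ δ ∈ S, SpecialCond (eta δ) (kk δ)

/-- Equality of the ω-ranges of two special ladder systems: `rd(η̄) = rd(ν̄)`. -/
def rdEq (S : Set Ordinal) (L M : LadderSystem S) : Prop :=
  ∀ δ ∈ S, ∀ n : ℕ,
    L.eta δ (L.kk δ n) + Ordinal.omega0 = M.eta δ (M.kk δ n) + Ordinal.omega0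

/-- Index type for the basis of the ambient `ℚ`-vector space `F`. -/
abbrev FIdx : Type 1 := Ordinal ⊕ (Ordinal × ℕ)

/-- The ambient `ℚ`-vector space `F`, with basis `x_β` (β an ordinal) and `y_{δ,n}`. -/
abbrev Fsp : Type 1 := FIdx →₀ ℚ

/-- The basis vector `x_β`. -/
def xgen (β : Ordinal) : Fsp := Finsupp.single (Sum.inl β) 1

/-- The basis vector `y_{δ,n}`. -/
def ygen (δ : Ordinal) (n : ℕ) : Fsp := Finsupp.single (Sum.inr (δ, n)) 1

/-- The elements `z_{δ,n}`, defined by `z_{δ,0} = y_δ` and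
`z_{δ,n+1} = ψ(n)⁻¹ (z_{δ,n} + Σ_{l<tₙ^δ} a_l^{δ,n} x_{η_δ(kₙ^δ+l)})`, equivalently
`ψ(n) z_{δ,n+1} = z_{δ,n} + Σ_{l<tₙ^δ} a_l^{δ,n} x_{η_δ(kₙ^δ+l)}`. -/
def zgen (eta : Ordinal → ℕ → Ordinal) (kk : Ordinal → ℕ → ℕ)
    (a : Ordinal → ℕ → ℕ → ℤ) (ψ : ℕ → ℕ) (δ : Ordinal) : ℕ → Fsp
  | 0 => ygen δ 0
  | n + 1 => ((ψ n : ℚ))⁻¹ •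
      (zgen eta kk a ψ δ n +
        ∑ l ∈ Finset.range (kk δ (n + 1) - kk δ n), a δ n l • xgen (eta δ (kk δ n + l)))

/-- All the data needed to build the group `G_η̄`: a special ladder system together with
the function `ψ` (everywhere nonzero) and the coefficients `a_l^{δ,n}` with
`gcd(a_l^{δ,n} : l < tₙ^δ) = 1`. -/
structure GroupData (S : Set Ordinal) extends LadderSystem S where
  a : Ordinal → ℕ → ℕ → ℤ
  psi : ℕ → ℕ
  psi_ne : ∀ n : ℕ, psi n ≠ 0
  a_gcd : ∀ δ ∈ S, ∀ n : ℕ, (Finset.range (kk δ (n + 1) - kk δ n)).gcd (a δ n) = 1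

/-- The group `G_η̄ ≤ (F,+)`, generated by the `x_β` (β < ω₁) and the `z_{δ,n}` (δ ∈ S). -/
def Ggrp (S : Set Ordinal) (D : GroupData S) : AddSubgroup Fsp :=
  AddSubgroup.closure
    ({f : Fsp | ∃ β < ω₁, f = xgen β} ∪
     {f : Fsp | ∃ δ ∈ S, ∃ n : ℕ, f = zgen D.eta D.kk D.a D.psi δ n})

/-- The `ℚ`-subspace `V_α` spanned by the `x_β` (β < α+ω) and `y_{δ,n}` (δ ∈ S ∩ α). -/
def Vsp (S : Set Ordinal) (α : Ordinal) : Submodule ℚ Fsp :=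
  Submodule.span ℚ
    ({f : Fsp | ∃ β < α + Ordinal.omega0, f = xgen β} ∪
     {f : Fsp | ∃ δ ∈ S, δ < α ∧ ∃ n : ℕ, f = ygen δ n})

/-- The pure closure of `H` in `G`: `{g ∈ G : m • g ∈ H for some nonzero integer m}`. -/
def purify (G H : AddSubgroup Fsp) : AddSubgroup Fsp where
  carrier := {g : Fsp | g ∈ G ∧ ∃ m : ℤ, m ≠ 0 ∧ m • g ∈ H}
  zero_mem' := ⟨G.zero_mem, 1, one_ne_zero, by simpa using H.zero_mem⟩
  add_mem' := by
    rintro g₁ g₂ ⟨hg₁, m₁, hm₁, h₁⟩ ⟨hg₂, m₂, hm₂, h₂⟩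
    refine ⟨G.add_mem hg₁ hg₂, m₁ * m₂, mul_ne_zero hm₁ hm₂, ?_⟩
    rw [smul_add]
    exact H.add_mem (by rw [mul_comm, mul_smul]; exact H.zsmul_mem h₁ _)
      (by rw [mul_smul]; exact H.zsmul_mem h₂ _)
  neg_mem' := by
    rintro g ⟨hg, m, hm, h⟩
    exact ⟨G.neg_mem hg, m, hm, by simpa using H.neg_mem h⟩

/-- The canonical filtration `G_η̄^α`: the pure closure in `G_η̄` of `G_η̄ ∩ V_α`. -/
def Gfil (S : Set Ordinal) (D : GroupData S) (α : Ordinal) : AddSubgroup Fsp :=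
  purify (Ggrp S D) ((Vsp S α).toAddSubgroup ⊓ Ggrp S D)

/-- `H` is a direct summand of `G` (both viewed as subgroups of the ambient group). -/
def IsDirectSummandIn (H G : AddSubgroup Fsp) : Prop :=
  H ≤ G ∧ ∃ K : AddSubgroup Fsp, K ≤ G ∧ H ⊓ K = ⊥ ∧ H ⊔ K = G

/-!
Since `ω²` divides `δ`, every `β < δ` satisfies `β + ω < δ` (write `β = ω² q + r` with `r < ω²`
and use that `ω²` is additively principal). Enumerate the countably many ordinals below `δ` as
`(e n)` and put `η 0 = 1`, `η (n + 1) = max (e n) (η n) + ω + 1`: this stays below `δ`, is cofinal,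
consists of successors, and consecutive terms are more than `ω` apart, so blocks of length one,
`kₙ = n + 1`, witness that it is special.
-/

namespace Ordinal

theorem add_lt_of_isPrincipal_add_of_dvd {ρ δ β ε : Ordinal} (hρ : IsPrincipal (· + ·) ρ)
    (hdvd : ρ ∣ δ) (hβ : β < δ) (hε : ε < ρ) : β + ε < δ := by
  obtain ⟨γ, rfl⟩ := hdvd
  have hρ0 : ρ ≠ 0 := hε.ne_bot
  calc β + ε = ρ * (β / ρ) + (β % ρ + ε) := by rw [← add_assoc, div_add_mod]
    _ < ρ * (β / ρ) + ρ := add_lt_add_right (hρ (mod_lt β hρ0) hε) _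
    _ = ρ * (β / ρ + 1) := (mul_add_one _ _).symm
    _ ≤ ρ * γ := mul_le_mul_right (Order.add_one_le_iff.2 ((lt_mul_iff_div_lt hρ0).1 hβ)) _

theorem add_omega0_lt_of_omega0_sq_dvd {δ β : Ordinal} (hδ : ω ^ 2 ∣ δ) (hβ : β < δ) :
    β + ω < δ := by
  rw [← opow_natCast] at hδ
  exact add_lt_of_isPrincipal_add_of_dvd (isPrincipal_add_omega0_opow _) hδ hβ <|
    left_lt_opow one_lt_omega0 (by norm_num)

theorem countable_Iio_of_lt_omega_one {o : Ordinal} (h : o < ω₁) : (Set.Iio o).Countable := by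
  rwa [← Cardinal.le_aleph0_iff_set_countable, Cardinal.mk_Iio_ordinal, Cardinal.lift_le_aleph0,
    ← Cardinal.lt_aleph_one_iff, ← lt_ord, Cardinal.ord_aleph]

end Ordinal

section LadderSeq

variable (e : ℕ → Ordinal)

def ladderSeq : ℕ → Ordinal
  | 0 => 1
  | n + 1 => max (e n) (ladderSeq n) + ω + 1

theorem max_add_omega0_lt_ladderSeq_succ (n : ℕ) :
    max (e n) (ladderSeq e n) + ω < ladderSeq e (n + 1) :=
  lt_add_one _

theorem ladderSeq_add_omega0_lt_succ (n : ℕ) : ladderSeq e n + ω < ladderSeq e (n + 1) :=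
  (add_le_add_left (le_max_right _ _) _).trans_lt (max_add_omega0_lt_ladderSeq_succ e n)

theorem lt_ladderSeq_succ (n : ℕ) : e n < ladderSeq e (n + 1) :=
  ((le_max_left _ _).trans le_self_add).trans_lt (max_add_omega0_lt_ladderSeq_succ e n)

theorem ladderSeq_strictMono : StrictMono (ladderSeq e) :=
  strictMono_nat_of_lt_succ fun n => le_self_add.trans_lt (ladderSeq_add_omega0_lt_succ e n)

theorem exists_ladderSeq_eq_add_one : ∀ n, ∃ α, ladderSeq e n = α + 1
  | 0 => ⟨0, (zero_add 1).symm⟩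
  | _ + 1 => ⟨_, rfl⟩

variable {e} {δ : Ordinal}

theorem ladderSeq_lt (hδ : Order.IsSuccLimit δ) (hω : ∀ β < δ, β + ω < δ)
    (he : ∀ n, e n < δ) (n : ℕ) : ladderSeq e n < δ := by
  induction n with
  | zero => exact one_lt_of_isSuccLimit hδ
  | succ n ih => exact hδ.succ_lt (hω _ (max_lt (he n) ih))

theorem isLadder_ladderSeq (hδ : Order.IsSuccLimit δ) (hω : ∀ β < δ, β + ω < δ)
    (he : ∀ n, e n < δ) (hcof : ∀ β < δ, ∃ n, β ≤ e n) : IsLadder δ (ladderSeq e) where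
  strictMono := ladderSeq_strictMono e
  isSucc := exists_ladderSeq_eq_add_one e
  lt_delta := ladderSeq_lt hδ hω he
  cofinal β hβ :=
    let ⟨n, hn⟩ := hcof β hβ
    ⟨n + 1, hn.trans_lt (lt_ladderSeq_succ e n)⟩

end LadderSeq

theorem specialCond_add_one {η : ℕ → Ordinal} (h : ∀ n, η n + ω < η (n + 1)) :
    SpecialCond η (· + 1) := by
  intro n
  refine ⟨fun i hi j hj => ?_, h (n + 1)⟩
  dsimp only at hi hj
  obtain rfl : i = 0 := by omega
  obtain rfl : j = 0 := by omega
  rfl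

theorem statement0_general (δ : Ordinal) (h1 : δ < ω₁) (h2 : Order.IsSuccLimit δ)
    (h4 : Ordinal.omega0 ^ 2 ∣ δ) :
    ∃ η : ℕ → Ordinal, ∃ k : ℕ → ℕ,
      IsLadder δ η ∧ 0 < k 0 ∧ StrictMono k ∧ SpecialCond η k := by
  obtain ⟨e, he⟩ := (countable_Iio_of_lt_omega_one h1).exists_surjective ⟨0, h2.bot_lt⟩
  have hcof : ∀ β < δ, ∃ n, β ≤ e n := fun β hβ =>
    let ⟨n, hn⟩ := he ⟨β, hβ⟩
    ⟨n, by rw [hn]⟩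
  exact ⟨ladderSeq (e ·), (· + 1),
    isLadder_ladderSeq h2 (fun _ => add_omega0_lt_of_omega0_sq_dvd h4) (fun n => (e n).2) hcof,
    Nat.succ_pos 0, fun _ _ => Nat.succ_lt_succ,
    specialCond_add_one (ladderSeq_add_omega0_lt_succ _)⟩

theorem statement0 (δ : Ordinal) (h1 : δ < ω₁) (h2 : Order.IsSuccLimit δ)
    (h3 : Ordinal.cof δ = Cardinal.aleph0) (h4 : Ordinal.omega0 ^ 2 ∣ δ) :
    ∃ η : ℕ → Ordinal, ∃ k : ℕ → ℕ,
      IsLadder δ η ∧ 0 < k 0 ∧ StrictMono k ∧ SpecialCond η k :=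
  statement0_general δ h1 h2 h4

end
end

section
/- Let η̄ be a special ladder system on S and let α < ω₁. Then there exists a family ⟨m_δ : δ ∈ S∩α⟩ of natural numbers such that the sets {η_δ(kₙ^δ)+ω : n ≥ m_δ} (for δ ∈ S∩α) are pairwise disjoint. In particular, the sets {η_δ(kₙ^δ+i) : n ≥ m_δ, i < tₙ^δ} (for δ ∈ S∩α) are then pairwise disjoint. -/
set_option autoImplicit false
noncomputable section

open Ordinal Cardinal

/-!
Enumerate the countable set `S ∩ α` as `δ₀, δ₁, …`. The points `η_δ(kₙ) + ω` lie below `δ`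
(because `ω² ∣ δ`) and converge to `δ`, so the sequences of two different `δ`'s have only
finitely many points in common. Cutting the sequence of `δᵢ` above its finitely many points in the
ranges of the sequences of `δ₀, …, δᵢ₋₁` makes the tails pairwise disjoint. Each block
`η_δ(kₙ + i)`, `i < tₙ`, lies in the `ω`-class of `η_δ(kₙ)`, which gives the second claim.
-/

open Filter Set

theorem Ordinal.countable_Iio_of_lt_omega_one_s9 {α : Ordinal} (hα : α < ω₁) : (Iio α).Countable := by
  rw [← le_aleph0_iff_set_countable, Cardinal.mk_Iio_ordinal, lift_le_aleph0, card_le_iff,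
    succ_aleph0, ord_aleph]
  exact hα

theorem Ordinal.add_omega0_lt_of_omega0_sq_dvd_s9 {β δ : Ordinal} (hδ : ω ^ 2 ∣ δ) (hβ : β < δ) :
    β + ω < δ := by
  obtain ⟨q, rfl⟩ := hδ
  rw [pow_two, mul_assoc] at hβ ⊢
  have hlim : Order.IsSuccLimit (ω * q) :=
    ⟨fun h => by simp [h.eq_bot] at hβ, isSuccPrelimit_iff_omega0_dvd.2 (dvd_mul_right _ _)⟩
  obtain ⟨c, hc, hβc⟩ := (lt_mul_iff_of_isSuccLimit hlim).1 hβ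
  calc β + ω ≤ ω * c + ω := add_le_add_left hβc.le _
    _ = ω * Order.succ c := (mul_succ _ _).symm
    _ < ω * (ω * q) := mul_lt_mul_of_pos_left (hlim.succ_lt hc) omega0_pos

theorem eventually_notMem_range_of_ne {α : Type*} [LinearOrder α] {f g : ℕ → α} {a b : α}
    (hfa : ∀ n, f n < a) (hf : ∀ c < a, ∀ᶠ n in atTop, c < f n)
    (hgb : ∀ n, g n < b) (hg : ∀ c < b, ∀ᶠ n in atTop, c < g n) (hab : a ≠ b) :
    ∀ᶠ n in atTop, f n ∉ range g := by
  rcases hab.lt_or_gt with hab | hba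
  · -- `g` eventually exceeds `a`, so only the finitely many earlier values of `g` can be hit.
    obtain ⟨M, hM⟩ := eventually_atTop.1 (hg a hab)
    have hinit : ∀ m ∈ Finset.range M, ∀ᶠ n in atTop, f n ≠ g m := fun m _ => by
      by_cases hm : g m < a
      · exact (hf _ hm).mono fun n hn => hn.ne'
      · exact Eventually.of_forall fun n => ((hfa n).trans_le (not_lt.1 hm)).ne
    filter_upwards [(eventually_all_finset _).2 hinit] with n hn
    rintro ⟨m, hm⟩
    by_cases hmM : m < M
    · exact hn m (Finset.mem_range.2 hmM) hm.symm
    · exact (hfa n).not_gt (hm ▸ hM m (not_lt.1 hmM))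
  · filter_upwards [hf b hba] with n hn
    rintro ⟨m, hm⟩
    exact (hgb m).not_gt (hm ▸ hn)

theorem exists_pairwise_disjoint_image_Ici {ι α : Type*} [Countable ι] (f : ι → ℕ → α)
    (h : Pairwise fun i j => ∀ᶠ n in atTop, f i n ∉ range (f j)) :
    ∃ m : ι → ℕ, Pairwise fun i j => Disjoint (f i '' Ici (m i)) (f j '' Ici (m j)) := by
  obtain ⟨e, he⟩ := exists_injective_nat ι
  -- The tail of `f i` avoids the whole range of every `f j` enumerated before `i`.
  have htail : ∀ i, ∀ᶠ n in atTop, ∀ j ∈ {j | e j < e i}, f i n ∉ range (f j) := fun i =>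
    ((finite_Iio (e i)).preimage he.injOn).eventually_all.2 fun j hj =>
      h fun hij => (hij ▸ hj : e i < e i).false
  choose m hm using fun i => eventually_atTop.1 (htail i)
  refine ⟨m, fun i j hij => ?_⟩
  wlog hji : e j < e i generalizing i j
  · exact (this j i hij.symm ((not_lt.1 hji).lt_of_ne (he.ne hij))).symm
  rw [disjoint_left]
  rintro _ ⟨n, hn, rfl⟩ ⟨n', -, hn'⟩
  exact hm i n hn j hji ⟨n', hn'⟩

namespace LadderSystem

variable {S : Set Ordinal} (L : LadderSystem S) {δ : Ordinal}

theorem eta_kk_add_omega0_lt (hδ : δ ∈ S) (hδω : ω ^ 2 ∣ δ) (n : ℕ) :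
    L.eta δ (L.kk δ n) + ω < δ :=
  add_omega0_lt_of_omega0_sq_dvd_s9 hδω ((L.ladder δ hδ).lt_delta _)

theorem eventually_lt_eta_kk_add_omega0 (hδ : δ ∈ S) {β : Ordinal} (hβ : β < δ) :
    ∀ᶠ n in atTop, β < L.eta δ (L.kk δ n) + ω := by
  obtain ⟨N, hN⟩ := (L.ladder δ hδ).cofinal β hβ
  filter_upwards [eventually_ge_atTop N] with n hn
  calc β < L.eta δ N := hN
    _ ≤ L.eta δ (L.kk δ n) :=
      (L.ladder δ hδ).strictMono.monotone (hn.trans ((L.kk_mono δ hδ).id_le n))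
    _ ≤ L.eta δ (L.kk δ n) + ω := le_self_add

theorem eventually_eta_kk_add_omega0_notMem_range (hS : GoodS S) {δ' : Ordinal} (hδ : δ ∈ S)
    (hδ' : δ' ∈ S) (hne : δ ≠ δ') :
    ∀ᶠ n in atTop, L.eta δ (L.kk δ n) + ω ∉ range fun n => L.eta δ' (L.kk δ' n) + ω :=
  eventually_notMem_range_of_ne (L.eta_kk_add_omega0_lt hδ (hS.omega_sq_dvd δ hδ))
    (fun _ => L.eventually_lt_eta_kk_add_omega0 hδ)
    (L.eta_kk_add_omega0_lt hδ' (hS.omega_sq_dvd δ' hδ'))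
    (fun _ => L.eventually_lt_eta_kk_add_omega0 hδ') hne

theorem eta_add_omega0_eq (hδ : δ ∈ S) {n i : ℕ} (hi : i < L.kk δ (n + 1) - L.kk δ n) :
    L.eta δ (L.kk δ n + i) + ω = L.eta δ (L.kk δ n) + ω :=
  (L.special δ hδ n).1 i hi 0 (by omega)

end LadderSystem

theorem statement9 (S : Set Ordinal) (hS : GoodS S) (L : LadderSystem S)
    (α : Ordinal) (hα : α < ω₁) :
    ∃ m : Ordinal → ℕ,
      (∀ δ₁, δ₁ ∈ S → δ₁ < α → ∀ δ₂, δ₂ ∈ S → δ₂ < α → δ₁ ≠ δ₂ →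
        Disjoint
          {o : Ordinal | ∃ n : ℕ, m δ₁ ≤ n ∧ o = L.eta δ₁ (L.kk δ₁ n) + Ordinal.omega0}
          {o : Ordinal | ∃ n : ℕ, m δ₂ ≤ n ∧ o = L.eta δ₂ (L.kk δ₂ n) + Ordinal.omega0}) ∧
      (∀ δ₁, δ₁ ∈ S → δ₁ < α → ∀ δ₂, δ₂ ∈ S → δ₂ < α → δ₁ ≠ δ₂ →
        Disjoint
          {o : Ordinal | ∃ n : ℕ, m δ₁ ≤ n ∧
            ∃ i < L.kk δ₁ (n + 1) - L.kk δ₁ n, o = L.eta δ₁ (L.kk δ₁ n + i)}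
          {o : Ordinal | ∃ n : ℕ, m δ₂ ≤ n ∧
            ∃ i < L.kk δ₂ (n + 1) - L.kk δ₂ n, o = L.eta δ₂ (L.kk δ₂ n + i)}) := by
  classical
  set F : Ordinal → ℕ → Ordinal := fun δ n => L.eta δ (L.kk δ n) + ω
  set I := S ∩ Iio α
  have hI : Countable I := ((countable_Iio_of_lt_omega_one_s9 hα).mono inter_subset_right).to_subtype
  obtain ⟨m, hm⟩ := exists_pairwise_disjoint_image_Ici (fun δ : I => F δ) fun δ δ' hne =>
    L.eventually_eta_kk_add_omega0_notMem_range hS δ.2.1 δ'.2.1 (Subtype.val_injective.ne hne)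
  have hdisj : ∀ δ₁, δ₁ ∈ S → δ₁ < α → ∀ δ₂, δ₂ ∈ S → δ₂ < α → δ₁ ≠ δ₂ →
      Disjoint {o | ∃ n, (if h : δ₁ ∈ I then m ⟨δ₁, h⟩ else 0) ≤ n ∧ o = F δ₁ n}
        {o | ∃ n, (if h : δ₂ ∈ I then m ⟨δ₂, h⟩ else 0) ≤ n ∧ o = F δ₂ n} := by
    intro δ₁ h₁ h₁' δ₂ h₂ h₂' hne
    simpa only [dif_pos (show δ₁ ∈ I from ⟨h₁, h₁'⟩), dif_pos (show δ₂ ∈ I from ⟨h₂, h₂'⟩),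
      image, mem_Ici, eq_comm] using
      hm (i := ⟨δ₁, h₁, h₁'⟩) (j := ⟨δ₂, h₂, h₂'⟩) (Subtype.coe_ne_coe.1 hne)
  refine ⟨fun δ => if h : δ ∈ I then m ⟨δ, h⟩ else 0, hdisj, ?_⟩
  intro δ₁ h₁ h₁' δ₂ h₂ h₂' hne
  refine ((hdisj δ₁ h₁ h₁' δ₂ h₂ h₂' hne).preimage (· + ω)).mono ?_ ?_ <;>
    rintro o ⟨n, hn, i, hi, rfl⟩
  exacts [⟨n, hn, L.eta_add_omega0_eq h₁ hi⟩, ⟨n, hn, L.eta_add_omega0_eq h₂ hi⟩]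

end
end

section
/- Let η̄ be a special ladder system on S which has ℵ₀-uniformization, and let G_η̄ be the associated group built with ψ(n) = n!. Then Ext(G_η̄, N) = 0 for every countable abelian group N: for every abelian group H and every surjective homomorphism p : H → G_η̄ whose kernel is countable, there is a homomorphism s : G_η̄ → H with p ∘ s = id. -/
set_option autoImplicit false
noncomputable section

open Ordinal Cardinal

/-- `η̄` has `Λ`-uniformization: every family of colors `c_δ : ω → Λ` can be uniformized. -/
def HasUniformization (S : Set Ordinal) (eta : Ordinal → ℕ → Ordinal) (Λ : Type) : Prop :=
  ∀ c : Ordinal → ℕ → Λ, ∃ Ψ : Ordinal → Λ, ∃ Ψs : Ordinal → ℕ,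
    ∀ δ ∈ S, ∀ n : ℕ, Ψs δ ≤ n → Ψ (eta δ n) = c δ n

/-- `η̄` is tree-like. -/
def TreeLike (S : Set Ordinal) (eta : Ordinal → ℕ → Ordinal) : Prop :=
  ∀ δ ∈ S, ∀ δ' ∈ S, ∀ n m : ℕ, eta δ n = eta δ' m →
    m = n ∧ ∀ k ≤ n, eta δ k = eta δ' k

/-!
Lift the generators `x_β` and `z_{δ,n}` of `G_η̄` arbitrarily through `p`. The defects
`ψ(n) ũ_{δ,n+1} - ũ_{δ,n} - Σ_l a_l^{δ,n} x̃_{η_δ(kₙ^δ+l)}` of the defining relations lie in the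
countable kernel. Since `gcd(a_l^{δ,n}) = 1`, colouring the `l`-th point of the `n`-th block of
`η_δ` by a Bézout multiple of the defect and uniformizing yields kernel corrections of the `x̃_β` that
make all but finitely many relations of each `δ` hold exactly; the remaining ones are repaired by a
backward recursion on the `ũ_{δ,n}`. Lifts satisfying every relation define a section: modulo the
relations every element of `G_η̄` is a combination of the `x_β` and a single `z_{δ,ν(δ)}` per `δ`,
and these are linearly independent in `F`.
-/

theorem Nat.exists_seq_of_backward_recursion {α : Type*} (a : α) (f : ℕ → α → α) (N : ℕ) :
    ∃ d : ℕ → α, (∀ n, N ≤ n → d n = a) ∧ ∀ n < N, d n = f n (d (n + 1)) := by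
  -- `g m n` runs the recursion down from the value `a` at `n + m`
  let g : ℕ → ℕ → α := fun m => Nat.rec (fun _ => a) (fun _ g n => f n (g (n + 1))) m
  refine ⟨fun n => g (N - n) n, fun n hn => by simp [g, Nat.sub_eq_zero_of_le hn], fun n hn => ?_⟩
  obtain ⟨m, hm, hm'⟩ : ∃ m, N - n = m + 1 ∧ N - (n + 1) = m := ⟨N - (n + 1), by omega, rfl⟩
  simp only [hm, hm', g]

theorem StrictMono.findGreatest_le_add {k : ℕ → ℕ} (hk : StrictMono k) {n l : ℕ}
    (hl : l < k (n + 1) - k n) : Nat.findGreatest (fun j => k j ≤ k n + l) (k n + l) = n := by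
  refine Nat.findGreatest_eq_iff.mpr ⟨hk.le_apply.trans (Nat.le_add_right _ _),
    fun _ => Nat.le_add_right _ _, fun j hj _ => ?_⟩
  have : k (n + 1) ≤ k j := hk.monotone hj
  omega

theorem LinearIndependent.eq_zero_of_mem_span_of_fst_eq_zero {R M N ι : Type*} [Ring R]
    [AddCommGroup M] [Module R M] [AddCommGroup N] [Module R N] {v : ι → M × N}
    (hv : LinearIndependent R (Prod.fst ∘ v)) {x : M × N} (hx : x ∈ Submodule.span R (Set.range v))
    (hx₁ : x.1 = 0) : x = 0 := by
  rw [← Finsupp.range_linearCombination] at hx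
  obtain ⟨c, rfl⟩ := hx
  have hc : Finsupp.linearCombination R (Prod.fst ∘ v) c = 0 := by
    rw [← hx₁]
    exact (Finsupp.apply_linearCombination R (LinearMap.fst R M N) v c).symm
  rw [linearIndependent_iff.mp hv c hc, map_zero]

theorem AddSubgroup.exists_section_of_graph {A H : Type*} [AddCommGroup A] [AddCommGroup H]
    {G : AddSubgroup A} (p : H →+ G) (T : AddSubgroup (A × H))
    (hpT : ∀ t ∈ T, (p t.2 : A) = t.1) (hGT : ∀ g ∈ G, ∃ y, (g, y) ∈ T)
    (hT : ∀ y : H, ((0 : A), y) ∈ T → y = 0) : ∃ s : G →+ H, ∀ g, p (s g) = g := by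
  let f : T →+ G := p.comp ((AddMonoidHom.snd A H).comp T.subtype)
  have hf : Function.Bijective f := by
    refine ⟨(injective_iff_map_eq_zero f).mpr fun t ht => ?_, ?_⟩
    · have h₁ : (t : A × H).1 = 0 := by
        rw [← hpT t t.2]
        exact congrArg Subtype.val ht
      have h₂ : (t : A × H).2 = 0 := hT _ (by rw [← h₁]; exact t.2)
      exact Subtype.ext (Prod.ext h₁ h₂)
    · rintro ⟨g, hg⟩
      obtain ⟨y, hy⟩ := hGT g hg
      exact ⟨⟨(g, y), hy⟩, Subtype.ext (hpT _ hy)⟩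
  let e := AddEquiv.ofBijective f hf
  exact ⟨(AddMonoidHom.snd A H).comp (T.subtype.comp e.symm.toAddMonoidHom),
    fun g => e.apply_symm_apply g⟩

theorem HasUniformization.exists_of_countable {S : Set Ordinal} {eta : Ordinal → ℕ → Ordinal}
    (h : HasUniformization S eta ℕ) {Λ : Type*} [Countable Λ] [Nonempty Λ]
    (c : Ordinal → ℕ → Λ) :
    ∃ Ψ : Ordinal → Λ, ∃ Ψs : Ordinal → ℕ, ∀ δ ∈ S, ∀ n, Ψs δ ≤ n → Ψ (eta δ n) = c δ n := by
  obtain ⟨f, hf⟩ := Countable.exists_injective_nat Λ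
  obtain ⟨Ψ, Ψs, hΨ⟩ := h fun δ n => f (c δ n)
  exact ⟨Function.invFun f ∘ Ψ, Ψs, fun δ hδ n hn => by
    rw [Function.comp_apply, hΨ δ hδ n hn, Function.leftInverse_invFun hf]⟩

namespace GroupData

variable {S : Set Ordinal} (D : GroupData S)

abbrev z : Ordinal → ℕ → Fsp := zgen D.eta D.kk D.a D.psi

def blockSum {M : Type*} [AddCommGroup M] (x : Ordinal → M) (δ : Ordinal) (n : ℕ) : M :=
  ∑ l ∈ Finset.range (D.kk δ (n + 1) - D.kk δ n), D.a δ n l • x (D.eta δ (D.kk δ n + l))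

variable {M N : Type*} [AddCommGroup M] [AddCommGroup N]

lemma blockSum_add (x y : Ordinal → M) (δ : Ordinal) (n : ℕ) :
    D.blockSum (x + y) δ n = D.blockSum x δ n + D.blockSum y δ n := by
  simp only [blockSum, Pi.add_apply, smul_add, Finset.sum_add_distrib]

lemma blockSum_congr {x y : Ordinal → M} {δ : Ordinal} (h : ∀ m, x (D.eta δ m) = y (D.eta δ m))
    (n : ℕ) : D.blockSum x δ n = D.blockSum y δ n := by
  simp only [blockSum, h]

lemma map_blockSum (f : M →+ N) (x : Ordinal → M) (δ : Ordinal) (n : ℕ) :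
    f (D.blockSum x δ n) = D.blockSum (f ∘ x) δ n := by
  simp only [blockSum, map_sum, map_zsmul, Function.comp_apply]

lemma blockSum_mem {K : Type*} [SetLike K M] [AddSubgroupClass K M] {k : K} {x : Ordinal → M}
    (hx : ∀ β, x β ∈ k) (δ : Ordinal) (n : ℕ) : D.blockSum x δ n ∈ k :=
  sum_mem fun _ _ => zsmul_mem (hx _) _

lemma psi_smul_z_succ (δ : Ordinal) (n : ℕ) :
    (D.psi n : ℤ) • D.z δ (n + 1) = D.z δ n + D.blockSum xgen δ n := by
  have hψ : (D.psi n : ℚ) ≠ 0 := Nat.cast_ne_zero.mpr (D.psi_ne n)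
  rw [← Int.cast_smul_eq_zsmul ℚ, z, zgen, smul_smul]
  push_cast
  rw [mul_inv_cancel₀ hψ, one_smul, blockSum]

lemma z_apply_inr (δ : Ordinal) (n : ℕ) (q : Ordinal × ℕ) :
    D.z δ n (Sum.inr q) = (∏ i ∈ Finset.range n, (D.psi i : ℚ))⁻¹ * ygen δ 0 (Sum.inr q) := by
  induction n with
  | zero => simp [zgen]
  | succ n ih =>
    simp only [z, zgen] at ih ⊢
    simp [ih, xgen, Finset.prod_range_succ, mul_comm, mul_assoc]

lemma z_apply_inr_self_ne_zero (δ : Ordinal) (n : ℕ) : D.z δ n (Sum.inr (δ, 0)) ≠ 0 := by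
  simp [z_apply_inr, ygen, Finset.prod_eq_zero_iff, D.psi_ne]

lemma z_apply_inr_of_ne {δ δ' : Ordinal} (h : δ ≠ δ') (n m : ℕ) :
    D.z δ n (Sum.inr (δ', m)) = 0 := by
  simp [z_apply_inr, ygen, h]

lemma linearIndependent_xgen_z (ν : S → ℕ) :
    LinearIndependent ℤ (Sum.elim xgen fun δ : S => D.z δ (ν δ)) := by
  rw [linearIndependent_iff']
  intro s c hsum
  have hcoord (j : FIdx) : ∑ i ∈ s, c i * Sum.elim xgen (fun δ : S => D.z δ (ν δ)) i j = 0 := by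
    simpa [Finsupp.finsetSum_apply, zsmul_eq_mul] using congrArg (· j) hsum
  have hz : ∀ δ : S, Sum.inr δ ∈ s → c (Sum.inr δ) = 0 := by
    intro δ hδ
    have h := hcoord (Sum.inr (δ, 0))
    rw [Finset.sum_eq_single (Sum.inr δ)] at h
    · exact_mod_cast (mul_eq_zero.mp h).resolve_right (D.z_apply_inr_self_ne_zero δ _)
    · rintro (β | δ') - hne
      · simp [xgen]
      · have : (δ' : Ordinal) ≠ δ := fun h => hne (by rw [Subtype.ext h])
        simp [D.z_apply_inr_of_ne this]
    · intro h; exact absurd hδ h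
  rintro (β | δ) hi
  · have h := hcoord (Sum.inl β)
    rw [Finset.sum_eq_single (Sum.inl β)] at h
    · simpa [xgen] using h
    · rintro (β' | δ') hj hne
      · have : β' ≠ β := fun h => hne (by rw [h])
        simp [xgen, this]
      · simp [hz δ' hj]
    · intro h; exact absurd hi h
  · exact hz δ hi

theorem exists_blockSum_eq (hunif : HasUniformization S D.eta ℕ) {K : Type*} [AddCommGroup K]
    [Countable K] (e : Ordinal → ℕ → K) :
    ∃ Ψ : Ordinal → K, ∃ N : Ordinal → ℕ, ∀ δ ∈ S, ∀ n, N δ ≤ n → D.blockSum Ψ δ n = e δ n := by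
  choose b hb using fun δ n =>
    Finset.gcd_eq_sum_mul (Finset.range (D.kk δ (n + 1) - D.kk δ n)) (D.a δ n)
  let blk (δ : Ordinal) (m : ℕ) : ℕ := Nat.findGreatest (fun j => D.kk δ j ≤ m) m
  -- colour the `l`-th point of the `n`-th block by the Bézout multiple `b l • e δ n`
  obtain ⟨Ψ, N, hΨ⟩ := hunif.exists_of_countable fun δ m =>
    b δ (blk δ m) (m - D.kk δ (blk δ m)) • e δ (blk δ m)
  refine ⟨Ψ, N, fun δ hδ n hn => ?_⟩
  have hblock : ∀ l ∈ Finset.range (D.kk δ (n + 1) - D.kk δ n),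
      D.a δ n l • Ψ (D.eta δ (D.kk δ n + l)) = (D.a δ n l * b δ n l) • e δ n := by
    intro l hl
    have hblk : blk δ (D.kk δ n + l) = n :=
      (D.kk_mono δ hδ).findGreatest_le_add (Finset.mem_range.mp hl)
    rw [hΨ δ hδ _ (hn.trans ((D.kk_mono δ hδ).le_apply.trans (Nat.le_add_right _ _))), hblk,
      Nat.add_sub_cancel_left, smul_smul]
  rw [blockSum, Finset.sum_congr rfl hblock, ← Finset.sum_smul, ← hb, D.a_gcd δ hδ n, one_smul]

theorem exists_blockSum_add_eq (hunif : HasUniformization S D.eta ℕ) {K : Type*}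
    [AddCommGroup K] [Countable K] (e : Ordinal → ℕ → K) :
    ∃ Ψ : Ordinal → K, ∃ d : Ordinal → ℕ → K, ∀ δ ∈ S, ∀ n,
      d δ n + D.blockSum Ψ δ n = e δ n + (D.psi n : ℤ) • d δ (n + 1) := by
  obtain ⟨Ψ, N, hΨ⟩ := D.exists_blockSum_eq hunif e
  choose d hd_of_le hd_of_lt using fun δ => Nat.exists_seq_of_backward_recursion 0
    (fun n x => e δ n + (D.psi n : ℤ) • x - D.blockSum Ψ δ n) (N δ)
  refine ⟨Ψ, d, fun δ hδ n => ?_⟩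
  rcases le_or_gt (N δ) n with hn | hn
  · rw [hd_of_le δ n hn, hd_of_le δ (n + 1) (hn.trans n.le_succ), hΨ δ hδ n hn, smul_zero,
      zero_add, add_zero]
  · rw [hd_of_lt δ n hn, sub_add_cancel]

variable {H : Type*}

def liftGenerators (hF : Ordinal → H) (u : Ordinal → ℕ → H) : Set (Fsp × H) :=
  {q | ∃ β < ω₁, q = (xgen β, hF β)} ∪ {q | ∃ δ ∈ S, ∃ n, q = (D.z δ n, u δ n)}

def levelFamily (hF : Ordinal → H) (u : Ordinal → ℕ → H) (ν : S → ℕ) : Ordinal ⊕ S → Fsp × H :=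
  Sum.elim (fun β => (xgen β, hF β)) fun δ => (D.z δ (ν δ), u δ (ν δ))

lemma linearIndependent_fst_levelFamily (hF : Ordinal → H) (u : Ordinal → ℕ → H) (ν : S → ℕ) :
    LinearIndependent ℤ (Prod.fst ∘ D.levelFamily hF u ν) := by
  rw [levelFamily, Sum.comp_elim]
  exact D.linearIndependent_xgen_z ν

variable [AddCommGroup H]

def RespectsRelations (hF : Ordinal → H) (u : Ordinal → ℕ → H) : Prop :=
  ∀ δ ∈ S, ∀ n, (D.psi n : ℤ) • u δ (n + 1) = u δ n + D.blockSum hF δ n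

def defect (hF : Ordinal → H) (u : Ordinal → ℕ → H) (δ : Ordinal) (n : ℕ) : H :=
  (D.psi n : ℤ) • u δ (n + 1) - u δ n - D.blockSum hF δ n

variable {D} {hF : Ordinal → H} {u : Ordinal → ℕ → H}

lemma RespectsRelations.pair_mem_span_levelFamily (h : D.RespectsRelations hF u) (ν : S → ℕ)
    (δ : S) {n : ℕ} (hn : n ≤ ν δ) :
    (D.z δ n, u δ n) ∈ Submodule.span ℤ (Set.range (D.levelFamily hF u ν)) := by
  induction hn using Nat.decreasingInduction with
  | self => exact Submodule.subset_span ⟨Sum.inr δ, rfl⟩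
  | of_succ k _ ih =>
    let xpair : Ordinal → Fsp × H := fun β => (xgen β, hF β)
    have hrel : (D.z δ k, u δ k) =
        (D.psi k : ℤ) • (D.z δ (k + 1), u δ (k + 1)) - D.blockSum xpair δ k := by
      have hfst : (D.blockSum xpair δ k).1 = D.blockSum xgen δ k :=
        D.map_blockSum (AddMonoidHom.fst Fsp H) xpair δ k
      have hsnd : (D.blockSum xpair δ k).2 = D.blockSum hF δ k :=
        D.map_blockSum (AddMonoidHom.snd Fsp H) xpair δ k
      refine Prod.ext ?_ ?_
      · rw [Prod.fst_sub, Prod.smul_fst, hfst, psi_smul_z_succ, add_sub_cancel_right]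
      · rw [Prod.snd_sub, Prod.smul_snd, hsnd, h δ δ.2 k, add_sub_cancel_right]
    rw [hrel]
    exact sub_mem (Submodule.smul_mem _ _ ih)
      (D.blockSum_mem (fun β => Submodule.subset_span (Set.mem_range_self (Sum.inl β))) δ k)

lemma RespectsRelations.monotone_span_levelFamily (h : D.RespectsRelations hF u) :
    Monotone fun ν => Submodule.span ℤ (Set.range (D.levelFamily hF u ν)) := by
  intro ν ν' hνν'
  refine Submodule.span_le.mpr ?_
  rintro _ ⟨β | δ, rfl⟩
  · exact Submodule.subset_span ⟨Sum.inl β, rfl⟩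
  · exact h.pair_mem_span_levelFamily ν' δ (hνν' δ)

lemma RespectsRelations.eq_zero_of_mem_closure (h : D.RespectsRelations hF u) {y : H}
    (hy : ((0 : Fsp), y) ∈ AddSubgroup.closure (D.liftGenerators hF u)) : y = 0 := by
  have hle : AddSubgroup.closure (D.liftGenerators hF u) ≤
      (⨆ ν, Submodule.span ℤ (Set.range (D.levelFamily hF u ν))).toAddSubgroup := by
    refine (AddSubgroup.closure_le _).mpr ?_
    rintro _ (⟨β, -, rfl⟩ | ⟨δ, hδ, n, rfl⟩)
    · exact Submodule.mem_iSup_of_mem (fun _ => 0) (Submodule.subset_span ⟨Sum.inl β, rfl⟩)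
    · exact Submodule.mem_iSup_of_mem (fun _ => n) (Submodule.subset_span ⟨Sum.inr ⟨δ, hδ⟩, rfl⟩)
  obtain ⟨ν, hν⟩ := (Submodule.mem_iSup_of_directed _ h.monotone_span_levelFamily.directed_le).mp
    (hle hy)
  exact congrArg Prod.snd
    ((D.linearIndependent_fst_levelFamily hF u ν).eq_zero_of_mem_span_of_fst_eq_zero hν rfl)

theorem RespectsRelations.exists_section (h : D.RespectsRelations hF u) (p : H →+ Ggrp S D)
    (hpF : ∀ β < ω₁, (p (hF β) : Fsp) = xgen β)
    (hpu : ∀ δ ∈ S, ∀ n, (p (u δ n) : Fsp) = D.z δ n) :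
    ∃ s : Ggrp S D →+ H, ∀ g, p (s g) = g := by
  let T := AddSubgroup.closure (D.liftGenerators hF u)
  have hpT : T ≤ AddMonoidHom.eqLocus ((Ggrp S D).subtype.comp (p.comp (AddMonoidHom.snd _ _)))
      (AddMonoidHom.fst _ _) := by
    refine (AddSubgroup.closure_le _).mpr ?_
    rintro _ (⟨β, hβ, rfl⟩ | ⟨δ, hδ, n, rfl⟩)
    · exact hpF β hβ
    · exact hpu δ hδ n
  have hGT : Ggrp S D ≤ T.map (AddMonoidHom.fst _ _) := by
    refine (AddSubgroup.closure_le _).mpr ?_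
    rintro _ (⟨β, hβ, rfl⟩ | ⟨δ, hδ, n, rfl⟩)
    · exact ⟨_, AddSubgroup.subset_closure (Or.inl ⟨β, hβ, rfl⟩), rfl⟩
    · exact ⟨_, AddSubgroup.subset_closure (Or.inr ⟨δ, hδ, n, rfl⟩), rfl⟩
  refine AddSubgroup.exists_section_of_graph p T (fun t ht => hpT ht) (fun g hg => ?_)
    (fun y hy => h.eq_zero_of_mem_closure hy)
  obtain ⟨t, ht, rfl⟩ := hGT hg
  exact ⟨t.2, ht⟩

theorem defect_mem_ker (hS : ∀ δ ∈ S, δ < ω₁) (p : H →+ Ggrp S D)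
    (hpF : ∀ β < ω₁, (p (hF β) : Fsp) = xgen β)
    (hpu : ∀ δ ∈ S, ∀ n, (p (u δ n) : Fsp) = D.z δ n) :
    ∀ δ ∈ S, ∀ n, D.defect hF u δ n ∈ p.ker := by
  intro δ hδ n
  have hx : D.blockSum ((Ggrp S D).subtype.comp p ∘ hF) δ n = D.blockSum xgen δ n :=
    D.blockSum_congr (fun m => hpF _ (((D.ladder δ hδ).lt_delta m).trans (hS δ hδ))) n
  refine AddMonoidHom.mem_ker.mpr (Subtype.ext ?_)
  change (Ggrp S D).subtype.comp p (D.defect hF u δ n) = 0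
  simp only [defect, map_sub, map_zsmul, D.map_blockSum]
  simp only [AddMonoidHom.comp_apply, AddSubgroup.coe_subtype, hpu δ hδ]
  rw [hx, D.psi_smul_z_succ, add_sub_cancel_left]
  exact sub_self _

theorem exists_respectsRelations_add (hunif : HasUniformization S D.eta ℕ) (K : AddSubgroup H)
    [Countable K] (hK : ∀ δ ∈ S, ∀ n, D.defect hF u δ n ∈ K) :
    ∃ Ψ : Ordinal → H, ∃ d : Ordinal → ℕ → H, (∀ β, Ψ β ∈ K) ∧ (∀ δ n, d δ n ∈ K) ∧
      D.RespectsRelations (hF + Ψ) (u + d) := by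
  classical
  obtain ⟨e, he⟩ : ∃ e : Ordinal → ℕ → K, ∀ δ ∈ S, ∀ n, (e δ n : H) = D.defect hF u δ n :=
    ⟨fun δ n => if hδ : δ ∈ S then ⟨_, hK δ hδ n⟩ else 0, fun δ hδ n => by simp [hδ]⟩
  obtain ⟨Ψ, d, hd⟩ := D.exists_blockSum_add_eq hunif e
  refine ⟨Subtype.val ∘ Ψ, fun δ n => d δ n, fun β => (Ψ β).2, fun δ n => (d δ n).2,
    fun δ hδ n => ?_⟩
  have hrel := congrArg K.subtype (hd δ hδ n)
  simp only [map_add, map_zsmul, D.map_blockSum, AddSubgroup.coe_subtype, he δ hδ n, defect]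
    at hrel
  simp only [Pi.add_apply, D.blockSum_add]
  linear_combination (norm := module) -hrel

end GroupData

theorem statement13_general (S : Set Ordinal) (hS : GoodS S) (D : GroupData S)
    (hunif : HasUniformization S D.eta ℕ)
    (H : Type 1) [AddCommGroup H] (p : H →+ ↥(Ggrp S D))
    (hsurj : Function.Surjective p) (hker : Countable ↥p.ker) :
    ∃ s : ↥(Ggrp S D) →+ H, ∀ g : ↥(Ggrp S D), p (s g) = g := by
  classical
  obtain ⟨σ, hσ⟩ : ∃ σ : Fsp → H, ∀ f ∈ Ggrp S D, (p (σ f) : Fsp) = f := by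
    choose σ hσ using hsurj
    exact ⟨fun f => if hf : f ∈ Ggrp S D then σ ⟨f, hf⟩ else 0, fun f hf => by simp [hf, hσ]⟩
  have hpx : ∀ β < ω₁, (p (σ (xgen β)) : Fsp) = xgen β :=
    fun β hβ => hσ _ (AddSubgroup.subset_closure (Or.inl ⟨β, hβ, rfl⟩))
  have hpz : ∀ δ ∈ S, ∀ n, (p (σ (D.z δ n)) : Fsp) = D.z δ n :=
    fun δ hδ n => hσ _ (AddSubgroup.subset_closure (Or.inr ⟨δ, hδ, n, rfl⟩))
  obtain ⟨Ψ, d, hΨ, hd, hrel⟩ := GroupData.exists_respectsRelations_add hunif p.ker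
    (GroupData.defect_mem_ker hS.lt_omega1 p hpx hpz)
  refine hrel.exists_section p (fun β hβ => ?_) (fun δ hδ n => ?_)
  · simp [hpx β hβ, AddMonoidHom.mem_ker.mp (hΨ β)]
  · simp [hpz δ hδ n, AddMonoidHom.mem_ker.mp (hd δ n)]

theorem statement13 (S : Set Ordinal) (hS : GoodS S) (D : GroupData S)
    (hpsi : D.psi = Nat.factorial)
    (hunif : HasUniformization S D.eta ℕ)
    (H : Type 1) [AddCommGroup H] (p : H →+ ↥(Ggrp S D))
    (hsurj : Function.Surjective p) (hker : Countable ↥p.ker) :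
    ∃ s : ↥(Ggrp S D) →+ H, ∀ g : ↥(Ggrp S D), p (s g) = g :=
  statement13_general S hS D hunif H p hsurj hker

end
end

section
/- Let P be the free abelian group on symbols X_β (β < ω₁) and Z_{δ,n} (δ ∈ S, n ∈ ω), and let Q ≤ P be the subgroup generated by the elements g_{δ,n} = ψ(n)Z_{δ,n+1} − Z_{δ,n} − Σ_{l<tₙ^δ} a_l^{δ,n} X_{η_δ(kₙ^δ+l)} (δ ∈ S, n ∈ ω). Then the homomorphism P → G_η̄ sending X_β ↦ x_β and Z_{δ,n} ↦ z_{δ,n} is surjective with kernel exactly Q; in other words, G_η̄ ≅ P/Q and the relations ψ(n)z_{δ,n+1} = z_{δ,n} + Σ_{l<tₙ^δ} a_l^{δ,n} x_{η_δ(kₙ^δ+l)} are the only relations satisfied by the generators of G_η̄. -/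
set_option autoImplicit false
noncomputable section

open Ordinal Cardinal

/-- The free abelian group `P` on the symbols `X_β` (β < ω₁) and `Z_{δ,n}` (δ ∈ S, n ∈ ω). -/
abbrev Pfree (S : Set Ordinal) : Type 1 :=
  ({β : Ordinal // β < ω₁} ⊕ ({δ : Ordinal // δ ∈ S} × ℕ)) →₀ ℤ

/-- The generator `X_β` of `P`. -/
def Xsym (S : Set Ordinal) (β : {β : Ordinal // β < ω₁}) : Pfree S :=
  Finsupp.single (Sum.inl β) 1

/-- The generator `Z_{δ,n}` of `P`. -/
def Zsym (S : Set Ordinal) (δ : {δ : Ordinal // δ ∈ S}) (n : ℕ) : Pfree S :=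
  Finsupp.single (Sum.inr (δ, n)) 1

/-- The homomorphism `P → F` sending `X_β ↦ x_β` and `Z_{δ,n} ↦ z_{δ,n}`. -/
def Pmap (S : Set Ordinal) (D : GroupData S) : Pfree S →ₗ[ℤ] Fsp :=
  Finsupp.linearCombination ℤ
    (Sum.elim (fun β => xgen β.1) (fun p => zgen D.eta D.kk D.a D.psi p.1.1 p.2))

/-!
Modulo the relations, `Z_{δ,n} ≡ (∏_{n ≤ i < N} ψ(i)) Z_{δ,N} + (a combination of the X_β)` for
every `N ≥ n`, so every element of `P` is congruent to one involving only the `X_β` and the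
`Z_{δ,N}` of a single level `N`. The map to `F` is injective on such elements: the
`y_{δ,0}`-coordinate of `z_{δ,N}` is `(∏_{i<N} ψ(i))⁻¹ ≠ 0` and no other generator of level `N`
has a `y_{δ,0}`-coordinate, after which the `x_β`-coordinates are read off directly. Conversely the
relations hold in `F` by the recursion defining `z_{δ,n+1}`.
-/

open Finsupp

lemma xgen_apply_inr (β : Ordinal) (p : Ordinal × ℕ) : xgen β (Sum.inr p) = 0 :=
  single_eq_of_ne (by simp)

lemma zgen_apply_inr (eta : Ordinal → ℕ → Ordinal) (kk : Ordinal → ℕ → ℕ)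
    (a : Ordinal → ℕ → ℕ → ℤ) (ψ : ℕ → ℕ) (δ : Ordinal) (p : Ordinal × ℕ) :
    ∀ n : ℕ, zgen eta kk a ψ δ n (Sum.inr p) =
      if p = (δ, 0) then (∏ i ∈ Finset.range n, (ψ i : ℚ))⁻¹ else 0
  | 0 => by simp [zgen, ygen, single_apply, eq_comm]
  | n + 1 => by
      rw [zgen, Finsupp.smul_apply, Finsupp.add_apply, finsetSum_apply,
        zgen_apply_inr _ _ _ _ _ _ n]
      simp only [Finsupp.smul_apply, xgen_apply_inr, smul_zero, Finset.sum_const_zero, add_zero,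
        Finset.prod_range_succ, mul_inv, _root_.smul_eq_mul]
      split_ifs <;> ring

namespace GroupData

variable {S : Set Ordinal} (D : GroupData S)

lemma psi_zsmul_zgen_succ (δ : Ordinal) (n : ℕ) :
    (D.psi n : ℤ) • zgen D.eta D.kk D.a D.psi δ (n + 1) =
      zgen D.eta D.kk D.a D.psi δ n +
        ∑ l ∈ Finset.range (D.kk δ (n + 1) - D.kk δ n),
          D.a δ n l • xgen (D.eta δ (D.kk δ n + l)) := by
  rw [zgen, ← Int.cast_smul_eq_zsmul ℚ, smul_smul, Int.cast_natCast,
    mul_inv_cancel₀ (by exact_mod_cast D.psi_ne n), one_smul]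

end GroupData

abbrev PIdx (S : Set Ordinal) : Type 1 := {β : Ordinal // β < ω₁} ⊕ ({δ : Ordinal // δ ∈ S} × ℕ)

def levelSet (S : Set Ordinal) (N : ℕ) : Set (PIdx S) :=
  Sum.elim (fun _ => True) (fun p => p.2 = N)

def level (S : Set Ordinal) : PIdx S → ℕ :=
  Sum.elim (fun _ => 0) Prod.snd

section Pmap

variable (S : Set Ordinal) (D : GroupData S)

def pmapGen : PIdx S → Fsp :=
  Sum.elim (fun β => xgen β.1) (fun p => zgen D.eta D.kk D.a D.psi p.1.1 p.2)

lemma Pmap_Xsym (β : {β : Ordinal // β < ω₁}) : Pmap S D (Xsym S β) = xgen β.1 := by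
  simp [Pmap, Xsym]

lemma Pmap_Zsym (δ : {δ : Ordinal // δ ∈ S}) (n : ℕ) :
    Pmap S D (Zsym S δ n) = zgen D.eta D.kk D.a D.psi δ.1 n := by
  simp [Pmap, Zsym]

lemma range_Pmap : (LinearMap.range (Pmap S D)).toAddSubgroup = Ggrp S D := by
  rw [Pmap, range_linearCombination, Submodule.span_int_eq_addSubgroupClosure, Ggrp]
  congr 1
  ext f
  constructor
  · rintro ⟨β | ⟨δ, n⟩, rfl⟩
    · exact Or.inl ⟨β.1, β.2, rfl⟩
    · exact Or.inr ⟨δ.1, δ.2, n, rfl⟩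
  · rintro (⟨β, hβ, rfl⟩ | ⟨δ, hδ, n, rfl⟩)
    · exact ⟨Sum.inl ⟨β, hβ⟩, rfl⟩
    · exact ⟨Sum.inr (⟨δ, hδ⟩, n), rfl⟩

lemma Pmap_apply_eq_single {q : Pfree S} {j : FIdx} (i : PIdx S)
    (h : ∀ i' ∈ q.support, i' ≠ i → pmapGen S D i' j = 0) :
    Pmap S D q j = q i * pmapGen S D i j := by
  rw [Pmap, linearCombination_apply, Finsupp.sum, finsetSum_apply]
  refine (Finset.sum_eq_single i (fun i' hi' hne => ?_) (fun hi => ?_)).trans ?_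
  · rw [Finsupp.smul_apply]
    exact (congrArg _ (h i' hi' hne)).trans (smul_zero _)
  · simp [notMem_support_iff.mp hi]
  · simp [pmapGen, zsmul_eq_mul]

lemma eq_zero_of_mem_supported_levelSet {N : ℕ} {r : Pfree S}
    (hr : r ∈ supported ℤ ℤ (levelSet S N)) (h0 : Pmap S D r = 0) : r = 0 := by
  have hlevel : ∀ i ∈ r.support, i ∈ levelSet S N := fun i hi => hr hi
  have hZ : ∀ p, r (Sum.inr p) = 0 := by
    rintro ⟨d, m⟩
    by_cases hm : m = N
    swap
    · exact notMem_support_iff.mp fun hi => hm (hlevel _ hi)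
    subst hm
    -- only `z_{d,m}` has a nonzero `y_{d,0}`-coordinate among the generators of level `m`
    have hy := Pmap_apply_eq_single S D (j := Sum.inr (d.1, 0)) (q := r) (Sum.inr (d, m)) ?_
    · have hprod : (∏ i ∈ Finset.range m, (D.psi i : ℚ)) ≠ 0 :=
        Finset.prod_ne_zero_iff.mpr fun i _ => Nat.cast_ne_zero.mpr (D.psi_ne i)
      simpa [h0, pmapGen, zgen_apply_inr, hprod] using hy.symm
    rintro (β | ⟨d', m'⟩) hi hne
    · exact xgen_apply_inr _ _
    · obtain rfl : m' = m := hlevel _ hi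
      have : d.1 ≠ d'.1 := fun h => hne (by rw [Subtype.ext h])
      simp [pmapGen, zgen_apply_inr, this]
  ext (β | p)
  · -- with the `Z`-coefficients gone, the `x_β`-coordinate of `Pmap r` is `r X_β`
    have hx := Pmap_apply_eq_single S D (j := Sum.inl β.1) (q := r) (Sum.inl β) ?_
    · simpa [h0, pmapGen, xgen] using hx.symm
    rintro (β' | p) hi hne
    · have : β'.1 ≠ β.1 := fun h => hne (by rw [Subtype.ext h])
      simp [pmapGen, xgen, this]
    · exact absurd (hZ p) (mem_support_iff.mp hi)
  · exact hZ p

end Pmap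

section Relations

variable (S : Set Ordinal) (hS : GoodS S) (D : GroupData S)

def ladderSum (δ : {δ : Ordinal // δ ∈ S}) (n : ℕ) : Pfree S :=
  ∑ l ∈ Finset.range (D.kk δ (n + 1) - D.kk δ n),
    D.a δ n l • Xsym S ⟨D.eta δ (D.kk δ n + l),
      ((D.ladder δ δ.2).lt_delta _).trans (hS.lt_omega1 δ δ.2)⟩

def relator (δ : {δ : Ordinal // δ ∈ S}) (n : ℕ) : Pfree S :=
  (D.psi n : ℤ) • Zsym S δ (n + 1) - Zsym S δ n - ladderSum S hS D δ n

def relations : AddSubgroup (Pfree S) :=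
  AddSubgroup.closure {r | ∃ δ : Ordinal, ∃ hδ : δ ∈ S, ∃ n : ℕ, r = relator S hS D ⟨δ, hδ⟩ n}

lemma Pmap_relator (δ : {δ : Ordinal // δ ∈ S}) (n : ℕ) : Pmap S D (relator S hS D δ n) = 0 := by
  simp only [relator, ladderSum, map_sub, map_zsmul, map_sum, Pmap_Zsym, Pmap_Xsym,
    D.psi_zsmul_zgen_succ]
  abel

lemma relations_le_ker : relations S hS D ≤ (LinearMap.ker (Pmap S D)).toAddSubgroup :=
  (AddSubgroup.closure_le _).mpr fun _ ⟨δ, hδ, n, hr⟩ => hr ▸ Pmap_relator S hS D ⟨δ, hδ⟩ n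

lemma Xsym_mem_supported_levelSet (N : ℕ) (β : {β : Ordinal // β < ω₁}) :
    Xsym S β ∈ supported ℤ ℤ (levelSet S N) :=
  single_mem_supported ℤ 1 trivial

lemma Zsym_mem_supported_levelSet (N : ℕ) (δ : {δ : Ordinal // δ ∈ S}) :
    Zsym S δ N ∈ supported ℤ ℤ (levelSet S N) :=
  single_mem_supported ℤ 1 rfl

lemma Zsym_mem_supported_sup_relations (δ : {δ : Ordinal // δ ∈ S}) {n N : ℕ} (hn : n ≤ N) :
    Zsym S δ n ∈ (supported ℤ ℤ (levelSet S N)).toAddSubgroup ⊔ relations S hS D := by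
  refine Nat.decreasingInduction (motive := fun n _ => Zsym S δ n ∈ _) (fun n _ ih => ?_)
    (AddSubgroup.mem_sup_left (Zsym_mem_supported_levelSet S N δ)) hn
  have hZ : Zsym S δ n =
      (D.psi n : ℤ) • Zsym S δ (n + 1) - ladderSum S hS D δ n - relator S hS D δ n := by
    rw [relator]
    abel
  rw [hZ]
  refine sub_mem (sub_mem (zsmul_mem ih _) (AddSubgroup.mem_sup_left ?_))
      (AddSubgroup.mem_sup_right (AddSubgroup.subset_closure ⟨δ.1, δ.2, n, rfl⟩))
  exact Submodule.sum_mem _ fun l _ =>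
    Submodule.smul_mem _ _ (Xsym_mem_supported_levelSet S _ _)

lemma mem_supported_sup_relations (q : Pfree S) :
    q ∈ (supported ℤ ℤ (levelSet S (q.support.sup (level S)))).toAddSubgroup ⊔
      relations S hS D := by
  set N := q.support.sup (level S)
  rw [← q.sum_single]
  refine AddSubgroup.sum_mem _ fun i hi => ?_
  rw [← smul_single_one]
  refine zsmul_mem ?_ _
  obtain β | ⟨δ, n⟩ := i
  · exact AddSubgroup.mem_sup_left (Xsym_mem_supported_levelSet S N β)
  · exact Zsym_mem_supported_sup_relations S hS D δ (Finset.le_sup (f := level S) hi)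

lemma mem_relations_of_Pmap_eq_zero {q : Pfree S} (hq : Pmap S D q = 0) :
    q ∈ relations S hS D := by
  obtain ⟨r, hr, t, ht, rfl⟩ := AddSubgroup.mem_sup.mp (mem_supported_sup_relations S hS D q)
  have hPt : Pmap S D t = 0 := relations_le_ker S hS D ht
  have hPr : Pmap S D r = 0 := by rwa [map_add, hPt, add_zero] at hq
  rw [eq_zero_of_mem_supported_levelSet S D hr hPr, zero_add]
  exact ht

end Relations

theorem statement18 (S : Set Ordinal) (hS : GoodS S) (D : GroupData S) :
    (∀ β : {β : Ordinal // β < ω₁}, Pmap S D (Xsym S β) = xgen β.1) ∧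
    (∀ (δ : {δ : Ordinal // δ ∈ S}) (n : ℕ),
      Pmap S D (Zsym S δ n) = zgen D.eta D.kk D.a D.psi δ.1 n) ∧
    (∀ q : Pfree S, Pmap S D q ∈ Ggrp S D) ∧
    (∀ g ∈ Ggrp S D, ∃ q : Pfree S, Pmap S D q = g) ∧
    (∀ q : Pfree S, (Pmap S D q = 0 ↔ q ∈ AddSubgroup.closure
      {r : Pfree S | ∃ δ : Ordinal, ∃ hδ : δ ∈ S, ∃ n : ℕ, r =
        (D.psi n : ℤ) • Zsym S ⟨δ, hδ⟩ (n + 1) - Zsym S ⟨δ, hδ⟩ n -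
          ∑ l ∈ Finset.range (D.kk δ (n + 1) - D.kk δ n),
            D.a δ n l • Xsym S ⟨D.eta δ (D.kk δ n + l),
              lt_trans ((D.ladder δ hδ).lt_delta (D.kk δ n + l)) (hS.lt_omega1 δ hδ)⟩})) := by
  refine ⟨Pmap_Xsym S D, Pmap_Zsym S D, fun q => ?_, fun g hg => ?_, fun q =>
    ⟨mem_relations_of_Pmap_eq_zero S hS D, fun hq => relations_le_ker S hS D hq⟩⟩
  · rw [← range_Pmap]
    exact ⟨q, rfl⟩
  · rwa [← range_Pmap] at hg

end
end

section
/- Let c¹, c² : ℕ → {0,1} and let u, v : ℕ → ℤ be sequences of integers satisfying n!·u(n+1) = u(n) − c¹(n) and n!·v(n+1) = v(n) − c²(n) for all n ∈ ℕ. If u(0) = v(0) and c¹(n) = c²(n) for n ∈ {0,1}, then c¹ = c². (This is the arithmetic core of the non-splitting argument: the first index n ≥ 2 at which c¹ and c² could differ would force n! to divide c²(n) − c¹(n) = ±1, a contradiction.) -/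
/-!
By induction `u n = v n` for all `n`: once `u n = v n` and `c¹ n = c² n`, the two recursions give
`n! * u (n + 1) = n! * v (n + 1)`. Conversely, `u n = v n` forces `n!` to divide `c² n - c¹ n`, which
lies in `{-1, 0, 1}`; for `n ≥ 2` this means `c¹ n = c² n`, and for `n < 2` it is assumed.
-/

theorem Fin.eq_of_dvd_sub {k : ℕ} {a b : Fin k} {m : ℤ} (hm : (k : ℤ) ≤ m)
    (h : m ∣ ((a : ℕ) : ℤ) - ((b : ℕ) : ℤ)) : a = b := by
  have hlt : |((a : ℕ) : ℤ) - ((b : ℕ) : ℤ)| < m := by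
    rw [abs_sub_lt_iff]
    constructor <;> omega
  exact Fin.ext (by exact_mod_cast sub_eq_zero.mp (Int.eq_zero_of_abs_lt_dvd h hlt))

theorem Fin.eq_of_mul_eq_sub {k : ℕ} {a b : Fin k} {m x y w : ℤ} (hm : (k : ℤ) ≤ m)
    (hx : m * x = w - ((a : ℕ) : ℤ)) (hy : m * y = w - ((b : ℕ) : ℤ)) : a = b :=
  Fin.eq_of_dvd_sub hm ⟨y - x, by rw [mul_sub, hx, hy]; ring⟩

theorem statement19 (c₁ c₂ : ℕ → Fin 2) (u v : ℕ → ℤ)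
    (hu : ∀ n : ℕ, (Nat.factorial n : ℤ) * u (n + 1) = u n - ((c₁ n : ℕ) : ℤ))
    (hv : ∀ n : ℕ, (Nat.factorial n : ℤ) * v (n + 1) = v n - ((c₂ n : ℕ) : ℤ))
    (h0 : u 0 = v 0) (hc : ∀ n < 2, c₁ n = c₂ n) :
    c₁ = c₂ := by
  have hcoeff : ∀ n, u n = v n → c₁ n = c₂ n := by
    intro n huv
    rcases lt_or_ge n 2 with hn | hn
    · exact hc n hn
    · have hfac : (2 : ℤ) ≤ n.factorial := by exact_mod_cast Nat.factorial_le hn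
      exact Fin.eq_of_mul_eq_sub hfac (hu n) (huv ▸ hv n)
  have huv : ∀ n, u n = v n := by
    intro n
    induction n with
    | zero => exact h0
    | succ n ih =>
      refine mul_left_cancel₀ (by positivity : (n.factorial : ℤ) ≠ 0) ?_
      rw [hu, hv, ih, hcoeff n ih]
  exact funext fun n => hcoeff n (huv n)
end
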